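/- arXiv:1207.1257 — 2 statements merged into one kernel-verified Lean document; each statement's English description precedes it below -/
import Mathlib

section
/- If M is a co-LMNS of Φ (i.e., λ(Φ)∖M is an LMNS of Φ), then M is an irreducible hitting set of LMES(Φ). -/
namespace LCNFStmt

/-- A clause is a finite set of literals (variable, polarity). -/
abbrev Clause (V : Type) := Finset (V × Bool)

def ClauseSat {V : Type} (τ : V → Bool) (c : Clause V) : Prop :=
  ∃ p ∈ c, τ p.1 = p.2

/-- τ is a model of a CNF formula (finite set of clauses). -/
def Sat {V : Type} (τ : V → Bool) (F : Finset (Clause V)) : Prop :=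
  ∀ c ∈ F, ClauseSat τ c

/-- Logical equivalence of CNF formulas: same models. -/
def Equiv {V : Type} (F₁ F₂ : Finset (Clause V)) : Prop :=
  ∀ τ, Sat τ F₁ ↔ Sat τ F₂

/-- F₁ implies F₂: every model of F₁ is a model of F₂. -/
def Implies {V : Type} (F₁ F₂ : Finset (Clause V)) : Prop :=
  ∀ τ, Sat τ F₁ → Sat τ F₂

/-- A labelled CNF formula: a CNF formula together with a labelling function. -/
structure LCNF (V L : Type) where
  F : Finset (Clause V)
  lab : Clause V → Finset L

variable {V L : Type} [DecidableEq V] [DecidableEq L]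

/-- The set of active labels λ(Φ). -/
def LCNF.active (Φ : LCNF V L) : Finset L := Φ.F.biUnion Φ.lab

/-- Clause set of the induced subformula Φ|_S : clauses all of whose labels lie in S. -/
def LCNF.restrict (Φ : LCNF V L) (S : Finset L) : Finset (Clause V) :=
  Φ.F.filter (fun c => Φ.lab c ⊆ S)

/-- Φ|_S ≡ Φ. -/
def LCNF.EquivTo (Φ : LCNF V L) (S : Finset L) : Prop :=
  Equiv (Φ.restrict S) Φ.F

/-- A label is redundant in Φ if removing it keeps the formula equivalent. -/
def LCNF.Redundant (Φ : LCNF V L) (l : L) : Prop :=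
  Φ.EquivTo (Φ.active.erase l)

/-- Labelled minimal equivalent subset. -/
def LCNF.LMES (Φ : LCNF V L) (S : Finset L) : Prop :=
  S ⊆ Φ.active ∧ Φ.EquivTo S ∧ ∀ S' ⊂ S, ¬ Φ.EquivTo S'

/-- Labelled maximal non-equivalent subset. -/
def LCNF.LMNS (Φ : LCNF V L) (S : Finset L) : Prop :=
  S ⊆ Φ.active ∧ ¬ Φ.EquivTo S ∧ ∀ S', S ⊂ S' → S' ⊆ Φ.active → Φ.EquivTo S'

/-- Labelled maximal satisfiable subset. -/
def LCNF.LMSS (Φ : LCNF V L) (S : Finset L) : Prop :=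
  S ⊆ Φ.active ∧ (∃ τ, Sat τ (Φ.restrict S)) ∧
    ∀ S', S ⊂ S' → S' ⊆ Φ.active → ¬ ∃ τ, Sat τ (Φ.restrict S')

/-- Hitting set of a collection of finite sets. -/
def HittingSet {α : Type} [DecidableEq α] (𝒮 : Set (Finset α)) (H : Finset α) : Prop :=
  ∀ A ∈ 𝒮, (H ∩ A).Nonempty

/-- Irreducible hitting set. -/
def IrredHittingSet {α : Type} [DecidableEq α] (𝒮 : Set (Finset α)) (H : Finset α) : Prop :=
  HittingSet 𝒮 H ∧ ∀ H' ⊂ H, ¬ HittingSet 𝒮 H'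

end LCNFStmt

/-! Every LMES meets `M`: an LMES inside `λ(Φ) \ M` would make `λ(Φ) \ M` equivalent to `Φ`.
Conversely, for `l ∈ M` maximality makes `(λ(Φ) \ M) ∪ {l}` equivalent to `Φ`, so it contains an
LMES, and `l` is the only element of `M` in it; hence no element of `M` can be dropped. -/

-- Reopened so that the section variable `[DecidableEq V]` is no longer in scope.
namespace LCNFStmt

theorem IrredHittingSet.of_forall_exists_inter_subset_singleton {α : Type} [DecidableEq α]
    {𝒮 : Set (Finset α)} {M : Finset α} (hM : HittingSet 𝒮 M)
    (hprivate : ∀ l ∈ M, ∃ A ∈ 𝒮, M ∩ A ⊆ {l}) : IrredHittingSet 𝒮 M := by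
  refine ⟨hM, fun H' hH' hH'hit => ?_⟩
  obtain ⟨l, hlM, hlH'⟩ := Finset.exists_of_ssubset hH'
  obtain ⟨A, hA, hMA⟩ := hprivate l hlM
  obtain ⟨x, hx⟩ := hH'hit A hA
  obtain ⟨hxH', hxA⟩ := Finset.mem_inter.mp hx
  have hxl : x = l := Finset.mem_singleton.mp (hMA (Finset.mem_inter.mpr ⟨hH'.1 hxH', hxA⟩))
  exact hlH' (hxl ▸ hxH')

namespace LCNF

variable {V L : Type} [DecidableEq L]

theorem restrict_mono (Φ : LCNF V L) {S S' : Finset L} (h : S ⊆ S') :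
    Φ.restrict S ⊆ Φ.restrict S' :=
  Finset.monotone_filter_right Φ.F fun _ _ hc => hc.trans h

theorem EquivTo.mono {Φ : LCNF V L} {S S' : Finset L} (he : Φ.EquivTo S) (h : S ⊆ S') :
    Φ.EquivTo S' := fun τ =>
  ⟨fun hS' => (he τ).mp fun c hc => hS' c (Φ.restrict_mono h hc),
    fun hF c hc => hF c (Finset.mem_filter.mp hc).1⟩

theorem exists_lmes_subset (Φ : LCNF V L) {T : Finset L} (hT : T ⊆ Φ.active)
    (he : Φ.EquivTo T) : ∃ S ⊆ T, Φ.LMES S := by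
  induction T using Finset.strongInduction with
  | H T ih =>
    by_cases hmin : ∀ S' ⊂ T, ¬ Φ.EquivTo S'
    · exact ⟨T, subset_rfl, hT, he, hmin⟩
    · push Not at hmin
      obtain ⟨S', hS'T, hS'⟩ := hmin
      obtain ⟨S, hSS', hS⟩ := ih S' hS'T (hS'T.1.trans hT) hS'
      exact ⟨S, hSS'.trans hS'T.1, hS⟩

theorem LMES.inter_nonempty_of_not_equivTo_sdiff {Φ : LCNF V L} {S : Finset L}
    (hS : Φ.LMES S) {M : Finset L} (hM : ¬ Φ.EquivTo (Φ.active \ M)) : (M ∩ S).Nonempty := by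
  by_contra hempty
  refine hM (hS.2.1.mono fun x hxS => Finset.mem_sdiff.mpr ⟨hS.1 hxS, fun hxM => hempty ?_⟩)
  exact ⟨x, Finset.mem_inter.mpr ⟨hxM, hxS⟩⟩

theorem LMNS.exists_lmes_subset_insert {Φ : LCNF V L} {N : Finset L} (hN : Φ.LMNS N)
    {l : L} (hl : l ∈ Φ.active \ N) : ∃ S ⊆ insert l N, Φ.LMES S := by
  obtain ⟨hlact, hlN⟩ := Finset.mem_sdiff.mp hl
  have hsub : insert l N ⊆ Φ.active := Finset.insert_subset hlact hN.1
  exact Φ.exists_lmes_subset hsub (hN.2.2 _ (Finset.ssubset_insert hlN) hsub)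

end LCNF

theorem colmns_is_irred_hs_of_lmes_general {V L : Type} [DecidableEq L]
    (Φ : LCNF V L)
    (M : Finset L) (hM : M ⊆ Φ.active)
    (hlmns : Φ.LMNS (Φ.active \ M)) :
    IrredHittingSet {S | Φ.LMES S} M := by
  refine .of_forall_exists_inter_subset_singleton
    (fun S hS => LCNF.LMES.inter_nonempty_of_not_equivTo_sdiff hS hlmns.2.1) fun l hlM => ?_
  have hl : l ∈ Φ.active \ (Φ.active \ M) := (Finset.sdiff_sdiff_eq_self hM).symm ▸ hlM
  obtain ⟨S, hSsub, hS⟩ := hlmns.exists_lmes_subset_insert hl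
  refine ⟨S, hS, fun x hx => ?_⟩
  obtain ⟨hxM, hxS⟩ := Finset.mem_inter.mp hx
  rcases Finset.mem_insert.mp (hSsub hxS) with rfl | hxN
  · exact Finset.mem_singleton_self x
  · exact absurd hxM (Finset.mem_sdiff.mp hxN).2

theorem colmns_is_irred_hs_of_lmes {V L : Type} [DecidableEq V] [DecidableEq L]
    (Φ : LCNF V L) (hne : Φ.active.Nonempty)
    (M : Finset L) (hM : M ⊆ Φ.active)
    (hlmns : Φ.LMNS (Φ.active \ M)) :
    IrredHittingSet {S | Φ.LMES S} M :=
  colmns_is_irred_hs_of_lmes_general Φ M hM hlmns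

end LCNFStmt
end

section
/- For any subformula Φ' = Φ|_{L'} of a labelled CNF formula Φ satisfying the hypotheses (λ(Φ) ≠ ∅ and at least one label irredundant if unlabelled clauses exist), Φ' ≢ Φ if and only if L' is a subset of some LMNS of Φ. -/
namespace LCNFStmt

variable {V L : Type} [DecidableEq V] [DecidableEq L]

/-! Restricting to more labels keeps more clauses, and a superset of clauses has fewer models,
so equivalence to `Φ` is upward closed among label sets. Hence `Φ|_L'` is non-equivalent iff
some non-equivalent `S ⊇ L'` exists, and among the finitely many subsets of `λ(Φ)` any such `S`
can be enlarged to a maximal one, i.e. an LMNS. -/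

theorem Sat.anti {V : Type} {τ : V → Bool} {F₁ F₂ : Finset (Clause V)} (h : F₁ ⊆ F₂)
    (hs : Sat τ F₂) : Sat τ F₁ :=
  fun c hc => hs c (h hc)

namespace LCNF

variable {V L : Type} [DecidableEq L] {Φ : LCNF V L} {S T : Finset L}

theorem restrict_mono_s16 (h : S ⊆ T) : Φ.restrict S ⊆ Φ.restrict T :=
  fun c hc => by
    rw [restrict, Finset.mem_filter] at hc ⊢
    exact ⟨hc.1, hc.2.trans h⟩

theorem restrict_subset : Φ.restrict S ⊆ Φ.F :=
  Finset.filter_subset _ _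

theorem EquivTo.mono_s16 (hS : Φ.EquivTo S) (h : S ⊆ T) : Φ.EquivTo T :=
  fun τ => ⟨fun hs => (hS τ).mp (Sat.anti (restrict_mono_s16 h) hs), Sat.anti restrict_subset⟩

theorem lmns_iff_maximal :
    Φ.LMNS S ↔ Maximal (fun S => S ⊆ Φ.active ∧ ¬ Φ.EquivTo S) S := by
  rw [maximal_iff_forall_gt, LMNS, and_assoc]
  refine and_congr_right fun _ => and_congr_right fun _ => forall_congr' fun T => ?_
  constructor
  · intro hT hST ⟨hTact, hTne⟩
    exact hTne (hT hST hTact)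
  · intro hT hST hTact
    by_contra hTne
    exact hT hST ⟨hTact, hTne⟩

theorem exists_lmns_superset (h : S ⊆ Φ.active) (hS : ¬ Φ.EquivTo S) :
    ∃ T, Φ.LMNS T ∧ S ⊆ T := by
  have hfin : {T : Finset L | T ⊆ Φ.active ∧ ¬ Φ.EquivTo T}.Finite :=
    Φ.active.powerset.finite_toSet.subset fun T hT => Finset.mem_powerset.mpr hT.1
  obtain ⟨T, hST, hT⟩ := hfin.exists_le_maximal (a := S) ⟨h, hS⟩
  exact ⟨T, lmns_iff_maximal.mpr hT, hST⟩

end LCNF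

theorem nonequiv_iff_subset_lmns_general {V L : Type} [DecidableEq L]
    (Φ : LCNF V L)
    (Lset : Finset L) (h : Lset ⊆ Φ.active) :
    ¬ Φ.EquivTo Lset ↔ ∃ S : Finset L, Φ.LMNS S ∧ Lset ⊆ S := by
  refine ⟨LCNF.exists_lmns_superset h, ?_⟩
  rintro ⟨S, hS, hLS⟩ hL
  exact hS.2.1 (hL.mono_s16 hLS)

theorem nonequiv_iff_subset_lmns {V L : Type} [DecidableEq V] [DecidableEq L]
    (Φ : LCNF V L) (hne : Φ.active.Nonempty)
    (hunlab : (∃ c ∈ Φ.F, Φ.lab c = ∅) → ∃ l ∈ Φ.active, ¬ Φ.Redundant l)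
    (Lset : Finset L) (h : Lset ⊆ Φ.active) :
    ¬ Φ.EquivTo Lset ↔ ∃ S : Finset L, Φ.LMNS S ∧ Lset ⊆ S :=
  nonequiv_iff_subset_lmns_general Φ Lset h

end LCNFStmt
end
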